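/- Assume (H_c), assume a₊(u) < +∞ for all u ∈ [0,1], and assume a₊ : [0,1] → ℝ is convex. Then for every σ ≥ σ_s the set {u ∈ [0,1] : a₊(u) ≤ 𝒱_σ(u)} is either empty or a closed interval [μ,ν] with 0 < μ ≤ ν < 1; consequently, for any u₀ ∈ (0,1), the set of critical levels S_σ := {ξ ∈ ℝ : there exists u ∈ (0,1) with 𝒢_σ(u) = ξ and 𝒢_σ'(u) = 0} of 𝒢_σ(u) := ∫_{u₀}^u ℋ(δ,𝒱_σ(δ)) dδ is either empty or a singleton. -/

import Mathlib

open Set Filter Topology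
open scoped ENNReal

noncomputable section

/-- The strip `Ω` between `-ω` and `ω` over `[0,1]`:
`Ω = {(u,s) : u ∈ [0,1], -ω(u) < s < ω(u)}`. -/
def OmegaSet (ω : ℝ → ℝ≥0∞) : Set (ℝ × ℝ) :=
  {p | p.1 ∈ Set.Icc (0:ℝ) 1 ∧ ENNReal.ofReal |p.2| < ω p.1}

/-- The set `𝒟` between `a₋ = -a₊` and `a₊` over `[0,1]`. -/
def DSet (aplus : ℝ → ℝ≥0∞) : Set (ℝ × ℝ) :=
  {p | p.1 ∈ Set.Icc (0:ℝ) 1 ∧ ENNReal.ofReal |p.2| < aplus p.1}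

/-- Standing data and hypotheses: a lower semicontinuous width `ω : [0,1] → (0,∞]`,
a regular flux `a` on `Ω` (odd in `s`, C¹, with `∂a/∂s > 0`), the maximal fluxes
`a₊(u) = lim_{s→ω(u)⁻} a(u,s)` (equivalently, the supremum over `0 < s < ω(u)`),
which are `+∞` whenever `ω(u) < ∞`, the partial inverse `g` on `𝒟` defined by
`a(u, g(u,v)) = v`, and a logistic-type reaction term `f`. -/
structure FluxData where
  ω : ℝ → ℝ≥0∞
  a : ℝ → ℝ → ℝ
  aplus : ℝ → ℝ≥0∞
  g : ℝ → ℝ → ℝ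
  f : ℝ → ℝ
  ω_pos : ∀ u ∈ Set.Icc (0:ℝ) 1, 0 < ω u
  ω_lsc : LowerSemicontinuousOn ω (Set.Icc (0:ℝ) 1)
  a_odd : ∀ u s, (u, s) ∈ OmegaSet ω → a u (-s) = - a u s
  a_C1 : ContDiffOn ℝ 1 (fun p : ℝ × ℝ => a p.1 p.2) (OmegaSet ω)
  a_deriv_pos : ∀ u s, (u, s) ∈ OmegaSet ω → ∃ d : ℝ, 0 < d ∧ HasDerivAt (a u) d s
  aplus_def : ∀ u ∈ Set.Icc (0:ℝ) 1,
      aplus u = ⨆ s ∈ {s : ℝ | 0 < s ∧ (u, s) ∈ OmegaSet ω}, ENNReal.ofReal (a u s)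
  aplus_pos : ∀ u ∈ Set.Icc (0:ℝ) 1, 0 < aplus u
  aplus_top : ∀ u ∈ Set.Icc (0:ℝ) 1, ω u < ⊤ → aplus u = ⊤
  g_spec : ∀ p ∈ DSet aplus, (p.1, g p.1 p.2) ∈ OmegaSet ω ∧ a p.1 (g p.1 p.2) = p.2
  f_C1 : ContDiffOn ℝ 1 f (Set.Icc (0:ℝ) 1)
  f_zero : f 0 = 0
  f_one : f 1 = 0
  f_pos : ∀ u ∈ Set.Ioo (0:ℝ) 1, 0 < f u

/-- A classic traveling wave of `u_t = (b(u,u_x))_x + f(u)` moving at speed `σ`: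
a C² increasing profile `u` with values in `(0,1)`, `0 < u' < ω(u)`, connecting
`0` at `-∞` to `1` at `+∞`, such that `ξ ↦ b(u(ξ),u'(ξ))` is differentiable and
`(b(u,u'))' - σ u' + f(u) = 0`. -/
def IsClassicTW (F : FluxData) (b : ℝ → ℝ → ℝ) (σ : ℝ) (u : ℝ → ℝ) : Prop :=
  ContDiff ℝ 2 u ∧
  (∀ ξ : ℝ, u ξ ∈ Set.Ioo (0:ℝ) 1) ∧
  (∀ ξ : ℝ, 0 < deriv u ξ ∧ ENNReal.ofReal (deriv u ξ) < F.ω (u ξ)) ∧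
  Filter.Tendsto u Filter.atBot (nhds 0) ∧
  Filter.Tendsto u Filter.atTop (nhds 1) ∧
  (∀ ξ : ℝ, HasDerivAt (fun t => b (u t) (deriv u t)) (σ * deriv u ξ - F.f (u ξ)) ξ)

/-- A right solution with speed `σ`: `V : (α,1] → ℝ`, continuous on `(α,1]`,
C¹ on `(α,1)`, `V(1) = 0`, and on `(α,1)` : `V > 0`, `(u,V(u)) ∈ 𝒟` and
`V' = σ - f(u)/g(u,V(u))`. -/
def IsRightSolution (F : FluxData) (σ α : ℝ) (V : ℝ → ℝ) : Prop :=
  α ∈ Set.Ico (0:ℝ) 1 ∧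
  ContinuousOn V (Set.Ioc α 1) ∧
  V 1 = 0 ∧
  ∀ u ∈ Set.Ioo α 1, 0 < V u ∧ (u, V u) ∈ DSet F.aplus ∧
    HasDerivAt V (σ - F.f u / F.g u (V u)) u

open Classical in
/-- `ℋ(u,V) = 1/g(u,V)` if `0 < V < a₊(u)`, and `0` if `V ≥ a₊(u)`. -/
def Hfun (F : FluxData) (u V : ℝ) : ℝ :=
  if ENNReal.ofReal V < F.aplus u then 1 / F.g u V else 0

/-- The solution `𝒱_σ` of the extended problem: continuous on `[0,1]`, C¹ on `(0,1)`,
`𝒱(1) = 0`, `𝒱 > 0` on `(0,1)` and `𝒱' = σ - f(u)·ℋ(u,𝒱(u))` on `(0,1)`. -/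
def IsVsol (F : FluxData) (σ : ℝ) (V : ℝ → ℝ) : Prop :=
  ContinuousOn V (Set.Icc (0:ℝ) 1) ∧ V 1 = 0 ∧
  (∀ u ∈ Set.Ioo (0:ℝ) 1, 0 < V u) ∧
  (∀ u ∈ Set.Ioo (0:ℝ) 1, HasDerivAt V (σ - F.f u * Hfun F u (V u)) u)

/-!
Since `a₊` is finite, `ω ≡ +∞`, and `𝒱_σ' = σ - f ℋ ≤ σ` with equality exactly on the contact
set `{a₊ ≤ 𝒱_σ}`. If a non-contact point `w` lay between two contact points `u₁ < u₂`, let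
`p < w` be the last contact point before `w`. Then `𝒱_σ'(p) = σ`, while `σ u - 𝒱_σ(u)` increases
strictly on `[p, w]`, so the chord slope of `a₊` over `[p, u₂]` is `< σ`; by convexity `a₊`, and
hence `𝒱_σ`, stays below that chord on `(p, w]`, forcing `𝒱_σ'(p) < σ`. So the contact set is an
interval. It avoids the endpoints since `𝒱_σ(1) = 0` and, for `σ ≥ σ_s`, `𝒱_σ(0) = 0`: by
comparison, `𝒱_σ` decreases in `σ`, and by at most `(σ' - σ)(1 - u)` from `σ` to `σ'`.
The critical points of `𝒢_σ` are the contact points, and `𝒢_σ' = 0` on that interval.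
-/

theorem exists_first_nonpos {D : ℝ → ℝ} {a b : ℝ} (hab : a ≤ b)
    (hD : ContinuousOn D (Icc a b)) (hb : D b ≤ 0) :
    ∃ q ∈ Icc a b, D q ≤ 0 ∧ ∀ u ∈ Ico a q, 0 < D u := by
  set S := {u ∈ Icc a b | D u ≤ 0}
  have hS : IsClosed S := hD.preimage_isClosed_of_isClosed isClosed_Icc isClosed_Iic
  have hbdd : BddBelow S := ⟨a, fun u hu => hu.1.1⟩
  obtain ⟨hqI, hq⟩ : sInf S ∈ S := hS.csInf_mem ⟨b, right_mem_Icc.2 hab, hb⟩ hbdd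
  refine ⟨sInf S, hqI, hq, fun u hu => ?_⟩
  by_contra! h
  exact (csInf_le hbdd ⟨⟨hu.1, hu.2.le.trans hqI.2⟩, h⟩).not_gt hu.2

theorem exists_last_zero {D : ℝ → ℝ} {a b : ℝ} (hab : a ≤ b)
    (hD : ContinuousOn D (Icc a b)) (ha : 0 ≤ D a) (hb : D b < 0) :
    ∃ p ∈ Ico a b, D p = 0 ∧ ∀ u ∈ Ioc p b, D u < 0 := by
  set S := {u ∈ Icc a b | 0 ≤ D u}
  have hS : IsClosed S := hD.preimage_isClosed_of_isClosed isClosed_Icc isClosed_Ici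
  have hbdd : BddAbove S := ⟨b, fun u hu => hu.1.2⟩
  obtain ⟨hpI, hp⟩ : sSup S ∈ S := hS.csSup_mem ⟨a, left_mem_Icc.2 hab, ha⟩ hbdd
  have hpb : sSup S < b := hpI.2.lt_of_ne fun h => (h ▸ hb).not_ge hp
  have hnot : ∀ u ∈ Ioc (sSup S) b, D u < 0 := fun u hu => by
    by_contra! h
    exact (le_csSup hbdd ⟨⟨hpI.1.trans hu.1.le, hu.2⟩, h⟩).not_gt hu.1
  refine ⟨sSup S, ⟨hpI.1, hpb⟩, hp.antisymm' ?_, hnot⟩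
  by_contra! hpos
  obtain ⟨c, hc, hDc⟩ := intermediate_value_Ioo' hpb.le
    (hD.mono (Icc_subset_Icc_left hpI.1)) ⟨hb, hpos⟩
  exact (hnot c ⟨hc.1, hc.2.le⟩).ne hDc

theorem nonpos_of_deriv_nonneg_where_pos {Z Z' : ℝ → ℝ} {a b : ℝ}
    (hZ : ContinuousOn Z (Icc a b)) (hb : Z b ≤ 0)
    (hZ' : ∀ x ∈ Ioo a b, 0 < Z x → HasDerivAt Z (Z' x) x ∧ 0 ≤ Z' x) :
    ∀ x ∈ Icc a b, Z x ≤ 0 := by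
  intro x hx
  by_contra! hpos
  obtain ⟨q, hq, hZq, hZpos⟩ := exists_first_nonpos hx.2 (hZ.mono (Icc_subset_Icc_left hx.1)) hb
  have hsub : Icc x q ⊆ Icc a b := Icc_subset_Icc hx.1 hq.2
  have hder : ∀ y ∈ interior (Icc x q), HasDerivAt Z (Z' y) y ∧ 0 ≤ Z' y := fun y hy => by
    rw [interior_Icc] at hy
    exact hZ' y ⟨hx.1.trans_lt hy.1, hy.2.trans_le hq.2⟩ (hZpos y ⟨hy.1.le, hy.2⟩)
  have hmono : MonotoneOn Z (Icc x q) :=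
    monotoneOn_of_hasDerivWithinAt_nonneg (convex_Icc x q) (hZ.mono hsub)
      (fun y hy => (hder y hy).1.hasDerivWithinAt) (fun y hy => (hder y hy).2)
  exact (hpos.trans_le (hmono (left_mem_Icc.2 hq.1) (right_mem_Icc.2 hq.1) hq.1)).not_ge hZq

namespace FluxData

variable {F : FluxData} {aR : ℝ → ℝ}
  (haR : ∀ u ∈ Icc (0:ℝ) 1, F.aplus u = ENNReal.ofReal (aR u))
include haR

theorem aR_pos {u : ℝ} (hu : u ∈ Icc (0:ℝ) 1) : 0 < aR u :=
  ENNReal.ofReal_pos.1 (haR u hu ▸ F.aplus_pos u hu)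

theorem continuousOn_aR (hc : ContinuousOn F.aplus (Icc (0:ℝ) 1)) :
    ContinuousOn aR (Icc (0:ℝ) 1) := by
  refine (ContinuousOn.congr (f := fun u => (F.aplus u).toReal) ?_ fun u hu => ?_)
  · exact fun u hu => (ENNReal.tendsto_toReal (haR u hu ▸ ENNReal.ofReal_ne_top)).comp (hc u hu)
  · dsimp only
    rw [haR u hu, ENNReal.toReal_ofReal (aR_pos haR hu).le]

theorem mem_OmegaSet {u : ℝ} (hu : u ∈ Icc (0:ℝ) 1) (s : ℝ) : (u, s) ∈ OmegaSet F.ω := by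
  have hω : F.ω u = ⊤ := by
    by_contra h
    exact ENNReal.ofReal_ne_top (haR u hu ▸ F.aplus_top u hu (lt_top_iff_ne_top.2 h))
  exact ⟨hu, hω ▸ ENNReal.ofReal_lt_top⟩

theorem strictMono_a {u : ℝ} (hu : u ∈ Icc (0:ℝ) 1) : StrictMono (F.a u) :=
  strictMono_of_deriv_pos fun s => by
    obtain ⟨d, hd, hda⟩ := F.a_deriv_pos u s (mem_OmegaSet haR hu s)
    rwa [hda.deriv]

theorem a_zero {u : ℝ} (hu : u ∈ Icc (0:ℝ) 1) : F.a u 0 = 0 := by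
  have h := F.a_odd u 0 (mem_OmegaSet haR hu 0)
  rw [neg_zero] at h
  linarith

theorem a_lt_aR {u : ℝ} (hu : u ∈ Icc (0:ℝ) 1) (s : ℝ) : F.a u s < aR u := by
  have hs : s < |s| + 1 := (le_abs_self s).trans_lt (lt_add_one _)
  have hle : ENNReal.ofReal (F.a u (|s| + 1)) ≤ F.aplus u := by
    rw [F.aplus_def u hu]
    exact le_biSup (fun s => ENNReal.ofReal (F.a u s))
      (show |s| + 1 ∈ {s | 0 < s ∧ (u, s) ∈ OmegaSet F.ω} from
        ⟨by positivity, mem_OmegaSet haR hu _⟩)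
  rw [haR u hu, ENNReal.ofReal_le_ofReal_iff (aR_pos haR hu).le] at hle
  exact (strictMono_a haR hu hs).trans_le hle

theorem a_g {u v : ℝ} (hu : u ∈ Icc (0:ℝ) 1) (hv : 0 < v) (hva : v < aR u) :
    F.a u (F.g u v) = v := by
  refine (F.g_spec (u, v) ⟨hu, ?_⟩).2
  rw [haR u hu, abs_of_pos hv]
  exact ENNReal.ofReal_lt_ofReal_iff (aR_pos haR hu) |>.2 hva

theorem lt_g_iff {u v s : ℝ} (hu : u ∈ Icc (0:ℝ) 1) (hv : 0 < v) (hva : v < aR u) :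
    s < F.g u v ↔ F.a u s < v := by
  rw [← (strictMono_a haR hu).lt_iff_lt, a_g haR hu hv hva]

theorem g_lt_iff {u v s : ℝ} (hu : u ∈ Icc (0:ℝ) 1) (hv : 0 < v) (hva : v < aR u) :
    F.g u v < s ↔ v < F.a u s := by
  rw [← (strictMono_a haR hu).lt_iff_lt, a_g haR hu hv hva]

theorem g_pos {u v : ℝ} (hu : u ∈ Icc (0:ℝ) 1) (hv : 0 < v) (hva : v < aR u) :
    0 < F.g u v :=
  (lt_g_iff haR hu hv hva).2 (by rwa [a_zero haR hu])

theorem Hfun_of_lt {u v : ℝ} (hu : u ∈ Icc (0:ℝ) 1) (hva : v < aR u) :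
    Hfun F u v = 1 / F.g u v :=
  if_pos (haR u hu ▸ (ENNReal.ofReal_lt_ofReal_iff (aR_pos haR hu)).2 hva)

theorem Hfun_of_le {u v : ℝ} (hu : u ∈ Icc (0:ℝ) 1) (hav : aR u ≤ v) : Hfun F u v = 0 :=
  if_neg (haR u hu ▸ (ENNReal.ofReal_le_ofReal hav).not_gt)

theorem Hfun_pos {u v : ℝ} (hu : u ∈ Icc (0:ℝ) 1) (hv : 0 < v) (hva : v < aR u) :
    0 < Hfun F u v := by
  rw [Hfun_of_lt haR hu hva]
  exact one_div_pos.2 (g_pos haR hu hv hva)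

theorem Hfun_nonneg {u v : ℝ} (hu : u ∈ Icc (0:ℝ) 1) (hv : 0 < v) : 0 ≤ Hfun F u v := by
  rcases lt_or_ge v (aR u) with hva | hav
  · exact (Hfun_pos haR hu hv hva).le
  · exact (Hfun_of_le haR hu hav).ge

theorem Hfun_anti {u v₁ v₂ : ℝ} (hu : u ∈ Icc (0:ℝ) 1) (hv₁ : 0 < v₁) (hv : v₁ ≤ v₂) :
    Hfun F u v₂ ≤ Hfun F u v₁ := by
  rcases lt_or_ge v₂ (aR u) with hva | hav
  · have hv₁a := hv.trans_lt hva
    rw [Hfun_of_lt haR hu hva, Hfun_of_lt haR hu hv₁a]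
    refine one_div_le_one_div_of_le (g_pos haR hu hv₁ hv₁a) ?_
    rw [← (strictMono_a haR hu).le_iff_le, a_g haR hu hv₁ hv₁a,
      a_g haR hu (hv₁.trans_le hv) hva]
    exact hv
  · rw [Hfun_of_le haR hu hav]
    exact Hfun_nonneg haR hu hv₁

theorem continuousAt_a_fst {t₀ : ℝ} (ht₀ : t₀ ∈ Ioo (0:ℝ) 1) (s : ℝ) :
    ContinuousAt (fun t => F.a t s) t₀ := by
  have hΩ : OmegaSet F.ω ∈ 𝓝 (t₀, s) :=
    mem_of_superset (prod_mem_nhds (Icc_mem_nhds ht₀.1 ht₀.2) univ_mem)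
      fun p hp => mem_OmegaSet haR hp.1 p.2
  exact ContinuousAt.comp (f := fun t => (t, s)) (F.a_C1.continuousOn.continuousAt hΩ)
    (continuousAt_id.prodMk continuousAt_const)

theorem continuousAt_g {V : ℝ → ℝ} {t₀ : ℝ} (ht₀ : t₀ ∈ Ioo (0:ℝ) 1)
    (haRt : ContinuousAt aR t₀) (hVt : ContinuousAt V t₀) (hV0 : 0 < V t₀) (hVa : V t₀ < aR t₀) :
    ContinuousAt (fun t => F.g t (V t)) t₀ := by
  have ht₀' : t₀ ∈ Icc (0:ℝ) 1 := Ioo_subset_Icc_self ht₀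
  have hev : ∀ᶠ t in 𝓝 t₀, t ∈ Icc (0:ℝ) 1 ∧ 0 < V t ∧ V t < aR t :=
    Eventually.and (Icc_mem_nhds ht₀.1 ht₀.2) <|
      (hVt.eventually (lt_mem_nhds hV0)).and (hVt.eventually_lt haRt hVa)
  refine tendsto_order.2 ⟨fun s hs => ?_, fun s hs => ?_⟩
  · have hsV := (lt_g_iff haR ht₀' hV0 hVa).1 hs
    filter_upwards [hev, (continuousAt_a_fst haR ht₀ s).eventually_lt hVt hsV]
      with t ⟨htI, hVt0, hVta⟩ hst
    exact (lt_g_iff haR htI hVt0 hVta).2 hst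
  · have hsV := (g_lt_iff haR ht₀' hV0 hVa).1 hs
    filter_upwards [hev, hVt.eventually_lt (continuousAt_a_fst haR ht₀ s) hsV]
      with t ⟨htI, hVt0, hVta⟩ hst
    exact (g_lt_iff haR htI hVt0 hVta).2 hst

theorem continuousAt_Hfun {V : ℝ → ℝ} {t₀ : ℝ} (ht₀ : t₀ ∈ Ioo (0:ℝ) 1)
    (haRt : ContinuousAt aR t₀) (hVt : ContinuousAt V t₀) (hV0 : 0 < V t₀) :
    ContinuousAt (fun t => Hfun F t (V t)) t₀ := by
  have ht₀' : t₀ ∈ Icc (0:ℝ) 1 := Ioo_subset_Icc_self ht₀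
  have hev : ∀ᶠ t in 𝓝 t₀, t ∈ Icc (0:ℝ) 1 ∧ 0 < V t :=
    Eventually.and (Icc_mem_nhds ht₀.1 ht₀.2) (hVt.eventually (lt_mem_nhds hV0))
  rcases lt_or_ge (V t₀) (aR t₀) with hVa | haV
  · have hg := (continuousAt_g haR ht₀ haRt hVt hV0 hVa).tendsto
    rw [ContinuousAt, Hfun_of_lt haR ht₀' hVa]
    refine (tendsto_const_nhds.div hg (g_pos haR ht₀' hV0 hVa).ne').congr' ?_
    filter_upwards [hev, hVt.eventually_lt haRt hVa] with t ⟨htI, _⟩ hVta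
    exact (Hfun_of_lt haR htI hVta).symm
  · rw [ContinuousAt, Hfun_of_le haR ht₀' haV]
    refine tendsto_order.2 ⟨fun ε hε => ?_, fun ε hε => ?_⟩
    · filter_upwards [hev] with t ⟨htI, hVt0⟩
      exact hε.trans_le (Hfun_nonneg haR htI hVt0)
    · -- near a contact point `V t` exceeds `a t (1/ε)`, so `g t (V t) > 1/ε` where defined
      have haV' : F.a t₀ (1 / ε) < V t₀ := (a_lt_aR haR ht₀' _).trans_le haV
      filter_upwards [hev, (continuousAt_a_fst haR ht₀ _).eventually_lt hVt haV']
        with t ⟨htI, hVt0⟩ hat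
      rcases lt_or_ge (V t) (aR t) with hVta | haVt
      · rw [Hfun_of_lt haR htI hVta]
        calc 1 / F.g t (V t) < 1 / (1 / ε) :=
              one_div_lt_one_div_of_lt (by positivity) ((lt_g_iff haR htI hVt0 hVta).2 hat)
          _ = ε := one_div_one_div ε
      · rwa [Hfun_of_le haR htI haVt]

end FluxData

namespace IsVsol

open FluxData

variable {F : FluxData} {σ : ℝ} {V : ℝ → ℝ}

theorem nonneg (hV : IsVsol F σ V) {u : ℝ} (hu : u ∈ Icc (0:ℝ) 1) : 0 ≤ V u := by
  have h01 : closure (Ioo (0:ℝ) 1) = Icc 0 1 := closure_Ioo zero_ne_one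
  exact le_on_closure (f := fun _ => (0:ℝ)) (fun x hx => (hV.2.2.1 x hx).le) continuousOn_const
    (h01 ▸ hV.1) (h01 ▸ hu)

theorem hasDerivAt_speed_mul_sub (hV : IsVsol F σ V) {u : ℝ} (hu : u ∈ Ioo (0:ℝ) 1) :
    HasDerivAt (fun x => σ * x - V x) (F.f u * Hfun F u (V u)) u := by
  have h := ((hasDerivAt_id' u).const_mul σ).sub (hV.2.2.2 u hu)
  rwa [mul_one, sub_sub_cancel] at h

variable {aR : ℝ → ℝ} (haR : ∀ u ∈ Icc (0:ℝ) 1, F.aplus u = ENNReal.ofReal (aR u))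
include haR

theorem le_of_speed_le {σ₁ σ₂ : ℝ} {V₁ V₂ : ℝ → ℝ} (hV₁ : IsVsol F σ₁ V₁)
    (hV₂ : IsVsol F σ₂ V₂) (hσ : σ₁ ≤ σ₂) {u : ℝ} (hu : u ∈ Icc (0:ℝ) 1) : V₂ u ≤ V₁ u := by
  suffices V₂ u - V₁ u ≤ 0 by linarith
  refine nonpos_of_deriv_nonneg_where_pos (Z := fun x => V₂ x - V₁ x)
    (Z' := fun x => (σ₂ - F.f x * Hfun F x (V₂ x)) - (σ₁ - F.f x * Hfun F x (V₁ x)))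
    (hV₂.1.sub hV₁.1) (by simp [hV₁.2.1, hV₂.2.1])
    (fun x hx hZ => ⟨(hV₂.2.2.2 x hx).sub (hV₁.2.2.2 x hx), ?_⟩) u hu
  have hH := Hfun_anti haR (Ioo_subset_Icc_self hx) (hV₁.2.2.1 x hx) (sub_pos.1 hZ).le
  nlinarith [F.f_pos x hx]

theorem le_add_of_speed_le {σ₁ σ₂ : ℝ} {V₁ V₂ : ℝ → ℝ} (hV₁ : IsVsol F σ₁ V₁)
    (hV₂ : IsVsol F σ₂ V₂) (hσ : σ₁ ≤ σ₂) {u : ℝ} (hu : u ∈ Icc (0:ℝ) 1) :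
    V₁ u ≤ V₂ u + (σ₂ - σ₁) * (1 - u) := by
  suffices V₁ u - V₂ u - (σ₂ - σ₁) * (1 - u) ≤ 0 by linarith
  refine nonpos_of_deriv_nonneg_where_pos (Z := fun x => V₁ x - V₂ x - (σ₂ - σ₁) * (1 - x))
    (Z' := fun x => (σ₁ - F.f x * Hfun F x (V₁ x)) - (σ₂ - F.f x * Hfun F x (V₂ x))
      - (σ₂ - σ₁) * (0 - 1))
    ((hV₁.1.sub hV₂.1).sub (by fun_prop)) (by simp [hV₁.2.1, hV₂.2.1])
    (fun x hx hZ => ⟨((hV₁.2.2.2 x hx).sub (hV₂.2.2.2 x hx)).sub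
      (((hasDerivAt_const x 1).sub (hasDerivAt_id' x)).const_mul _), ?_⟩) u hu
  have hV : V₂ x ≤ V₁ x := by nlinarith [hx.2]
  have hH := Hfun_anti haR (Ioo_subset_Icc_self hx) (hV₂.2.2.1 x hx) hV
  nlinarith [F.f_pos x hx]

theorem monotoneOn_speed_mul_sub (hV : IsVsol F σ V) :
    MonotoneOn (fun x => σ * x - V x) (Icc (0:ℝ) 1) := by
  refine monotoneOn_of_hasDerivWithinAt_nonneg (f' := fun x => F.f x * Hfun F x (V x))
    (convex_Icc 0 1) ((continuousOn_const.mul continuousOn_id).sub hV.1) (fun x hx => ?_)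
    fun x hx => ?_ <;> rw [interior_Icc] at hx
  · exact (hV.hasDerivAt_speed_mul_sub hx).hasDerivWithinAt
  · exact mul_nonneg (F.f_pos x hx).le (Hfun_nonneg haR (Ioo_subset_Icc_self hx) (hV.2.2.1 x hx))

theorem strictMonoOn_speed_mul_sub (hV : IsVsol F σ V) {a b : ℝ} (ha : 0 ≤ a) (hb : b ≤ 1)
    (hVa : ∀ x ∈ Ioo a b, V x < aR x) : StrictMonoOn (fun x => σ * x - V x) (Icc a b) := by
  have hsub : Icc a b ⊆ Icc 0 1 := Icc_subset_Icc ha hb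
  refine strictMonoOn_of_hasDerivWithinAt_pos (f' := fun x => F.f x * Hfun F x (V x))
    (convex_Icc a b) ((continuousOn_const.mul continuousOn_id).sub (hV.1.mono hsub))
    (fun x hx => ?_) fun x hx => ?_ <;> rw [interior_Icc] at hx <;>
    have hx01 : x ∈ Ioo (0:ℝ) 1 := ⟨ha.trans_lt hx.1, hx.2.trans_le hb⟩
  · exact (hV.hasDerivAt_speed_mul_sub hx01).hasDerivWithinAt
  · exact mul_pos (F.f_pos x hx01)
      (Hfun_pos haR (Ioo_subset_Icc_self hx01) (hV.2.2.1 x hx01) (hVa x hx))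

theorem ordConnected_contactSet (hconv : ConvexOn ℝ (Icc (0:ℝ) 1) aR)
    (haRc : ContinuousOn aR (Icc (0:ℝ) 1)) (hV : IsVsol F σ V) :
    OrdConnected {u | u ∈ Ioo (0:ℝ) 1 ∧ aR u ≤ V u} := by
  refine ⟨fun u₁ h₁ u₂ h₂ w hw => ?_⟩
  have hw01 : w ∈ Ioo (0:ℝ) 1 := ⟨h₁.1.1.trans_le hw.1, hw.2.trans_lt h₂.1.2⟩
  refine ⟨hw01, not_lt.1 fun hVw => ?_⟩
  obtain ⟨p, hp, hDp, hlt⟩ := exists_last_zero (D := fun u => V u - aR u) hw.1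
    ((hV.1.sub haRc).mono (Icc_subset_Icc h₁.1.1.le hw01.2.le)) (sub_nonneg.2 h₁.2)
    (sub_neg.2 hVw)
  have hp01 : p ∈ Ioo (0:ℝ) 1 := ⟨h₁.1.1.trans_le hp.1, hp.2.trans hw01.2⟩
  have hVp : V p = aR p := sub_eq_zero.1 hDp
  have hpu₂ : p < u₂ := hp.2.trans_le hw.2
  have hderiv : HasDerivAt V σ p := by
    simpa [Hfun_of_le haR (Ioo_subset_Icc_self hp01) hVp.ge] using hV.2.2.2 p hp01
  have hψ : σ * p - V p < σ * u₂ - V u₂ :=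
    (hV.strictMonoOn_speed_mul_sub haR hp01.1.le hw01.2.le
        (fun x hx => sub_neg.1 (hlt x ⟨hx.1, hx.2.le⟩))
        (left_mem_Icc.2 hp.2.le) (right_mem_Icc.2 hp.2.le) hp.2).trans_le
      (hV.monotoneOn_speed_mul_sub haR (Ioo_subset_Icc_self hw01)
        (Ioo_subset_Icc_self h₂.1) hw.2)
  have hchord : slope aR p u₂ < σ := by
    rw [slope_def_field, div_lt_iff₀ (sub_pos.2 hpu₂)]
    linarith [h₂.2]
  have hslope : ∀ u ∈ Ioc p w, slope V p u < slope aR p u₂ := fun u hu =>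
    calc slope V p u < slope aR p u := by
          rw [slope_def_field, slope_def_field, hVp]
          exact div_lt_div_of_pos_right (by linarith [hlt u hu]) (sub_pos.2 hu.1)
      _ ≤ slope aR p u₂ :=
          hconv.slope_mono (Ioo_subset_Icc_self hp01)
            ⟨⟨hp01.1.le.trans hu.1.le, hu.2.trans hw01.2.le⟩, hu.1.ne'⟩
            ⟨Ioo_subset_Icc_self h₂.1, hpu₂.ne'⟩ (hu.2.trans hw.2)
  have hσ : σ ≤ slope aR p u₂ :=
    le_of_tendsto (hderiv.tendsto_slope.mono_left (nhdsGT_le_nhdsNE p))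
      (mem_of_superset (Ioc_mem_nhdsGT hp.2) fun u hu => (hslope u hu).le)
  linarith

theorem contactSet_eq_empty_or_Icc (hconv : ConvexOn ℝ (Icc (0:ℝ) 1) aR)
    (haRc : ContinuousOn aR (Icc (0:ℝ) 1)) (hV : IsVsol F σ V) (hV0 : V 0 = 0) :
    {u : ℝ | u ∈ Icc (0:ℝ) 1 ∧ aR u ≤ V u} = ∅ ∨
      ∃ μ ν : ℝ, 0 < μ ∧ μ ≤ ν ∧ ν < 1 ∧ {u : ℝ | u ∈ Icc (0:ℝ) 1 ∧ aR u ≤ V u} = Icc μ ν := by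
  set K := {u : ℝ | u ∈ Icc (0:ℝ) 1 ∧ aR u ≤ V u}
  have hK : K = {u | u ∈ Ioo (0:ℝ) 1 ∧ aR u ≤ V u} := by
    ext u
    refine ⟨fun ⟨hu, hle⟩ => ⟨⟨hu.1.lt_of_ne ?_, hu.2.lt_of_ne ?_⟩, hle⟩,
      fun ⟨hu, hle⟩ => ⟨Ioo_subset_Icc_self hu, hle⟩⟩
    · rintro rfl
      rw [hV0] at hle
      exact (aR_pos haR hu).not_ge hle
    · rintro rfl
      rw [hV.2.1] at hle
      exact (aR_pos haR hu).not_ge hle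
  have hKsub : K ⊆ Ioo 0 1 := fun u hu => (hK ▸ hu : u ∈ {u | u ∈ Ioo (0:ℝ) 1 ∧ aR u ≤ V u}).1
  rcases K.eq_empty_or_nonempty with hKe | hKne
  · exact Or.inl hKe
  have hcl : IsClosed K := isClosed_Icc.isClosed_le haRc hV.1
  have hbddB : BddBelow K := ⟨0, fun u hu => hu.1.1⟩
  have hbddA : BddAbove K := ⟨1, fun u hu => hu.1.2⟩
  have hconn : IsConnected K :=
    ⟨hKne, hK ▸ (hV.ordConnected_contactSet haR hconv haRc).isPreconnected⟩
  exact Or.inr ⟨sInf K, sSup K, (hKsub (hcl.csInf_mem hKne hbddB)).1,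
    csInf_le_csSup hKne hbddB hbddA, (hKsub (hcl.csSup_mem hKne hbddA)).2,
    eq_Icc_csInf_csSup_of_connected_bdd_closed hconn hbddB hbddA hcl⟩

theorem hasDerivAt_integral_Hfun (haRc : ContinuousOn aR (Icc (0:ℝ) 1)) (hV : IsVsol F σ V)
    {u₀ u : ℝ} (hu₀ : u₀ ∈ Ioo (0:ℝ) 1) (hu : u ∈ Ioo (0:ℝ) 1) :
    HasDerivAt (fun x => ∫ t in u₀..x, Hfun F t (V t)) (Hfun F u (V u)) u := by
  have hH : ContinuousOn (fun t => Hfun F t (V t)) (Ioo 0 1) := fun t ht =>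
    (continuousAt_Hfun haR ht (haRc.continuousAt (Icc_mem_nhds ht.1 ht.2))
      (hV.1.continuousAt (Icc_mem_nhds ht.1 ht.2)) (hV.2.2.1 t ht)).continuousWithinAt
  exact intervalIntegral.integral_hasDerivAt_right
    (hH.mono (ordConnected_Ioo.uIcc_subset hu₀ hu)).intervalIntegrable
    (hH.stronglyMeasurableAtFilter isOpen_Ioo u hu) (hH.continuousAt (isOpen_Ioo.mem_nhds hu))

theorem criticalLevels_subsingleton (hconv : ConvexOn ℝ (Icc (0:ℝ) 1) aR)
    (haRc : ContinuousOn aR (Icc (0:ℝ) 1)) (hV : IsVsol F σ V) {u₀ : ℝ}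
    (hu₀ : u₀ ∈ Ioo (0:ℝ) 1) :
    {ξ : ℝ | ∃ u ∈ Ioo (0:ℝ) 1, (∫ t in u₀..u, Hfun F t (V t)) = ξ ∧
      deriv (fun x => ∫ t in u₀..x, Hfun F t (V t)) u = 0}.Subsingleton := by
  set G := fun x => ∫ t in u₀..x, Hfun F t (V t)
  set K := {u | u ∈ Ioo (0:ℝ) 1 ∧ aR u ≤ V u}
  have hG : ∀ u ∈ Ioo (0:ℝ) 1, HasDerivAt G (Hfun F u (V u)) u := fun u hu =>
    hV.hasDerivAt_integral_Hfun haR haRc hu₀ hu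
  have hcrit : ∀ u ∈ Ioo (0:ℝ) 1, deriv G u = 0 → u ∈ K := fun u hu h =>
    ⟨hu, not_lt.1 fun hlt => (Hfun_pos haR (Ioo_subset_Icc_self hu) (hV.2.2.1 u hu) hlt).ne'
      ((hG u hu).deriv.symm.trans h)⟩
  have hconst : ∀ u₁ ∈ K, ∀ u₂ ∈ K, u₁ ≤ u₂ → G u₂ = G u₁ := by
    intro u₁ h₁ u₂ h₂ h12
    have hK : Icc u₁ u₂ ⊆ K := (hV.ordConnected_contactSet haR hconv haRc).out h₁ h₂
    refine constant_of_has_deriv_right_zero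
      (fun x hx => (hG x (hK hx).1).continuousAt.continuousWithinAt) (fun x hx => ?_) u₂
      (right_mem_Icc.2 h12)
    have hxK := hK (Ico_subset_Icc_self hx)
    simpa [Hfun_of_le haR (Ioo_subset_Icc_self hxK.1) hxK.2] using (hG x hxK.1).hasDerivWithinAt
  rintro _ ⟨u₁, hu₁, rfl, hd₁⟩ _ ⟨u₂, hu₂, rfl, hd₂⟩
  rcases le_total u₁ u₂ with h | h
  · exact (hconst u₁ (hcrit u₁ hu₁ hd₁) u₂ (hcrit u₂ hu₂ hd₂) h).symm
  · exact hconst u₂ (hcrit u₂ hu₂ hd₂) u₁ (hcrit u₁ hu₁ hd₁) h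

end IsVsol

theorem vsol_apply_zero_of_sInf_le {F : FluxData} {aR : ℝ → ℝ}
    (haR : ∀ u ∈ Icc (0:ℝ) 1, F.aplus u = ENNReal.ofReal (aR u)) {𝒱 : ℝ → ℝ → ℝ}
    (h𝒱 : ∀ σ : ℝ, 0 ≤ σ → IsVsol F σ (𝒱 σ)) (hne : {σ : ℝ | 0 ≤ σ ∧ 𝒱 σ 0 = 0}.Nonempty)
    {σ : ℝ} (hσ : sInf {σ : ℝ | 0 ≤ σ ∧ 𝒱 σ 0 = 0} ≤ σ) : 𝒱 σ 0 = 0 := by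
  have hσ0 : 0 ≤ σ := (le_csInf hne fun τ hτ => hτ.1).trans hσ
  have h0 : (0:ℝ) ∈ Icc (0:ℝ) 1 := left_mem_Icc.2 zero_le_one
  refine le_antisymm (le_of_forall_pos_le_add fun ε hε => ?_) ((h𝒱 σ hσ0).nonneg h0)
  obtain ⟨τ, ⟨hτ0, hτ⟩, hτσ⟩ := exists_lt_of_csInf_lt hne (lt_add_of_le_of_pos hσ hε)
  rcases le_total τ σ with h | h
  · have := (h𝒱 τ hτ0).le_of_speed_le haR (h𝒱 σ hσ0) h h0
    linarith
  · have := (h𝒱 σ hσ0).le_add_of_speed_le haR (h𝒱 τ hτ0) h h0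
    linarith

theorem stmt14_general (F : FluxData) (hc : ContinuousOn F.aplus (Set.Icc (0:ℝ) 1))
    (aR : ℝ → ℝ) (haR : ∀ u ∈ Set.Icc (0:ℝ) 1, F.aplus u = ENNReal.ofReal (aR u))
    (hconv : ConvexOn ℝ (Set.Icc (0:ℝ) 1) aR)
    (𝒱 : ℝ → ℝ → ℝ) (h𝒱 : ∀ σ : ℝ, 0 ≤ σ → IsVsol F σ (𝒱 σ))
    (σs : ℝ) (hσs : σs = sInf {σ : ℝ | 0 ≤ σ ∧ 𝒱 σ 0 = 0})
    (hne : {σ : ℝ | 0 ≤ σ ∧ 𝒱 σ 0 = 0}.Nonempty)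
    (σ : ℝ) (hσ : σs ≤ σ) :
    ({u : ℝ | u ∈ Set.Icc (0:ℝ) 1 ∧ aR u ≤ 𝒱 σ u} = ∅ ∨
      ∃ μ ν : ℝ, 0 < μ ∧ μ ≤ ν ∧ ν < 1 ∧
        {u : ℝ | u ∈ Set.Icc (0:ℝ) 1 ∧ aR u ≤ 𝒱 σ u} = Set.Icc μ ν) ∧
    ∀ u₀ ∈ Set.Ioo (0:ℝ) 1, ∀ G : ℝ → ℝ,
      (∀ u : ℝ, G u = ∫ t in u₀..u, Hfun F t (𝒱 σ t)) →
      ({ξ : ℝ | ∃ u ∈ Set.Ioo (0:ℝ) 1, G u = ξ ∧ deriv G u = 0} = ∅ ∨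
        ∃ ξ₀ : ℝ, {ξ : ℝ | ∃ u ∈ Set.Ioo (0:ℝ) 1, G u = ξ ∧ deriv G u = 0} = {ξ₀}) := by
  subst hσs
  have hV := h𝒱 σ ((le_csInf hne fun τ hτ => hτ.1).trans hσ)
  have haRc := FluxData.continuousOn_aR haR hc
  refine ⟨hV.contactSet_eq_empty_or_Icc haR hconv haRc (vsol_apply_zero_of_sInf_le haR h𝒱 hne hσ),
    fun u₀ hu₀ G hG => ?_⟩
  obtain rfl : G = fun u => ∫ t in u₀..u, Hfun F t (𝒱 σ t) := funext hG
  exact (hV.criticalLevels_subsingleton haR hconv haRc hu₀).eq_empty_or_singleton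

theorem stmt14 (F : FluxData) (hc : ContinuousOn F.aplus (Set.Icc (0:ℝ) 1))
    (hfin : ∀ u ∈ Set.Icc (0:ℝ) 1, F.aplus u ≠ ⊤)
    (aR : ℝ → ℝ) (haR : ∀ u ∈ Set.Icc (0:ℝ) 1, F.aplus u = ENNReal.ofReal (aR u))
    (hconv : ConvexOn ℝ (Set.Icc (0:ℝ) 1) aR)
    (𝒱 : ℝ → ℝ → ℝ) (h𝒱 : ∀ σ : ℝ, 0 ≤ σ → IsVsol F σ (𝒱 σ))
    (σs : ℝ) (hσs : σs = sInf {σ : ℝ | 0 ≤ σ ∧ 𝒱 σ 0 = 0})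
    (hne : {σ : ℝ | 0 ≤ σ ∧ 𝒱 σ 0 = 0}.Nonempty)
    (σ : ℝ) (hσ : σs ≤ σ) :
    ({u : ℝ | u ∈ Set.Icc (0:ℝ) 1 ∧ aR u ≤ 𝒱 σ u} = ∅ ∨
      ∃ μ ν : ℝ, 0 < μ ∧ μ ≤ ν ∧ ν < 1 ∧
        {u : ℝ | u ∈ Set.Icc (0:ℝ) 1 ∧ aR u ≤ 𝒱 σ u} = Set.Icc μ ν) ∧
    ∀ u₀ ∈ Set.Ioo (0:ℝ) 1, ∀ G : ℝ → ℝ,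
      (∀ u : ℝ, G u = ∫ t in u₀..u, Hfun F t (𝒱 σ t)) →
      ({ξ : ℝ | ∃ u ∈ Set.Ioo (0:ℝ) 1, G u = ξ ∧ deriv G u = 0} = ∅ ∨
        ∃ ξ₀ : ℝ, {ξ : ℝ | ∃ u ∈ Set.Ioo (0:ℝ) 1, G u = ξ ∧ deriv G u = 0} = {ξ₀}) :=
  stmt14_general F hc aR haR hconv 𝒱 h𝒱 σs hσs hne σ hσ
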